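/- Assume the two-strain SI model hypotheses. If R_0^x ≤ 1 < R_0^y, then the set of equilibria of the two-strain SI system is exactly {E_0, E_2}, where E_0 = (Λ/μ_S, 0, 0) and E_2 = (1/r_y, 0, a ↦ (μ_S(R_0^y − 1)/r_y)·π_y(a)). -/

import Mathlib

open MeasureTheory Real Set

/-- Survival probability `π(a) = exp(-∫_0^a μ)`. -/
noncomputable def survival (μ : ℝ → ℝ) (a : ℝ) : ℝ :=
  Real.exp (-(∫ s in (0:ℝ)..a, μ s))

/-- An equilibrium of the two-strain infection-age structured SI system:
`S ≥ 0`, `x, y ≥ 0` are continuously differentiable on `[0,∞)` with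
`x' = -μₓ x`, `y' = -μ_y y`, renewal boundary conditions
`x 0 = S ∫ βₓ x`, `y 0 = S ∫ β_y y`, and the balance `Λ = μ_S S + x 0 + y 0`. -/
def IsEquilibrium (Λ μS : ℝ) (μx μy βx βy : ℝ → ℝ)
    (S : ℝ) (x y : ℝ → ℝ) : Prop :=
  0 ≤ S ∧ (∀ a, 0 ≤ a → 0 ≤ x a) ∧ (∀ a, 0 ≤ a → 0 ≤ y a) ∧
  (∀ a, 0 ≤ a → HasDerivWithinAt x (-(μx a) * x a) (Ici 0) a) ∧
  (∀ a, 0 ≤ a → HasDerivWithinAt y (-(μy a) * y a) (Ici 0) a) ∧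
  x 0 = S * ∫ a in Ici (0:ℝ), βx a * x a ∧
  y 0 = S * ∫ a in Ici (0:ℝ), βy a * y a ∧
  Λ = μS * S + x 0 + y 0

/-!
Along an equilibrium the age profiles solve `x' = -μₓ x`, `y' = -μ_y y`, so `x = x(0) πₓ` and
`y = y(0) π_y`, and the renewal conditions become `x(0) = S x(0) rₓ`, `y(0) = S y(0) r_y`.
If `x(0) ≠ 0` then `S rₓ = 1`, and multiplying the balance `Λ = μ_S S + x(0) + y(0)` by `rₓ`
gives `Λ rₓ > μ_S`, i.e. `R₀ˣ > 1`. Hence `x(0) = 0`, and then either `y(0) = 0` (giving `E₀`)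
or `S = 1 / r_y`, in which case the balance determines `y(0)` (giving `E₂`).
-/

section Survival

variable {μ : ℝ → ℝ}

@[simp]
lemma survival_zero (μ : ℝ → ℝ) : survival μ 0 = 1 := by
  simp [survival]

lemma survival_pos (μ : ℝ → ℝ) (a : ℝ) : 0 < survival μ a :=
  exp_pos _

lemma survival_eqOn_comp_max (μ : ℝ → ℝ) :
    EqOn (survival μ) (survival fun s => μ (max s 0)) (Ici 0) := by
  intro a ha
  have hμ : EqOn μ (fun s => μ (max s 0)) (uIcc 0 a) := by
    intro s hs
    rw [uIcc_of_le ha] at hs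
    simp [max_eq_left hs.1]
  simp only [survival, intervalIntegral.integral_congr hμ]

lemma hasDerivAt_survival (hμ : Continuous μ) (a : ℝ) :
    HasDerivAt (survival μ) (-μ a * survival μ a) a := by
  have h := (hμ.integral_hasStrictDerivAt 0 a).hasDerivAt.neg.exp
  exact (h : HasDerivAt (survival μ) _ a).congr_deriv (mul_comm _ _)

lemma hasDerivWithinAt_survival (hμ : ContinuousOn μ (Ici 0)) {a : ℝ} (ha : 0 ≤ a) :
    HasDerivWithinAt (survival μ) (-μ a * survival μ a) (Ici 0) a := by
  -- the fundamental theorem of calculus is applied to the continuous extension `μ (max s 0)`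
  have hμ' : Continuous fun s => μ (max s 0) :=
    hμ.comp_continuous (continuous_id.max continuous_const) fun s => le_max_right s 0
  have h := (hasDerivAt_survival hμ' a).hasDerivWithinAt (s := Ici 0)
  rw [← survival_eqOn_comp_max μ ha, max_eq_left ha] at h
  exact h.congr (survival_eqOn_comp_max μ) (survival_eqOn_comp_max μ ha)

lemma eq_mul_survival_of_hasDerivWithinAt (hμ : ContinuousOn μ (Ici 0)) {x : ℝ → ℝ}
    (hx : ∀ a, 0 ≤ a → HasDerivWithinAt x (-μ a * x a) (Ici 0) a) {a : ℝ} (ha : 0 ≤ a) :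
    x a = x 0 * survival μ a := by
  have hquot : ∀ b, 0 ≤ b → HasDerivWithinAt (fun b => x b / survival μ b) 0 (Ici 0) b := by
    intro b hb
    refine ((hx b hb).div (hasDerivWithinAt_survival hμ hb) (survival_pos μ b).ne').congr_deriv ?_
    ring
  have hconst := constant_of_has_deriv_right_zero (a := 0) (b := a)
    (fun b hb => (hquot b hb.1).continuousWithinAt.mono Icc_subset_Ici_self)
    (fun b hb => (hquot b hb.1).mono (Ici_subset_Ici.2 hb.1)) a ⟨ha, le_rfl⟩
  rwa [survival_zero, div_one, div_eq_iff (survival_pos μ a).ne'] at hconst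

end Survival

lemma setIntegral_Ici_mul_eq_of_eq_const_mul {β x s : ℝ → ℝ} {c : ℝ}
    (h : ∀ a, 0 ≤ a → x a = c * s a) :
    ∫ a in Ici (0:ℝ), β a * x a = c * ∫ a in Ici (0:ℝ), β a * s a := by
  rw [← integral_const_mul]
  refine setIntegral_congr_fun measurableSet_Ici fun a ha => ?_
  simp only [h a ha]
  ring

lemma isEquilibrium_mul_survival {Λ μS : ℝ} {μx μy βx βy : ℝ → ℝ}
    (hμx : ContinuousOn μx (Ici 0)) (hμy : ContinuousOn μy (Ici 0)) {S x0 y0 : ℝ}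
    (hS : 0 ≤ S) (hx0 : 0 ≤ x0) (hy0 : 0 ≤ y0)
    (hxb : x0 = S * (x0 * ∫ a in Ici (0:ℝ), βx a * survival μx a))
    (hyb : y0 = S * (y0 * ∫ a in Ici (0:ℝ), βy a * survival μy a))
    (hbal : Λ = μS * S + x0 + y0) :
    IsEquilibrium Λ μS μx μy βx βy S
      (fun a => x0 * survival μx a) (fun a => y0 * survival μy a) := by
  refine ⟨hS, fun a _ => mul_nonneg hx0 (survival_pos μx a).le,
    fun a _ => mul_nonneg hy0 (survival_pos μy a).le,
    fun a ha => ((hasDerivWithinAt_survival hμx ha).const_mul x0).congr_deriv (by ring),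
    fun a ha => ((hasDerivWithinAt_survival hμy ha).const_mul y0).congr_deriv (by ring),
    ?_, ?_, ?_⟩ <;>
  simp only [survival_zero, mul_one, setIntegral_Ici_mul_eq_of_eq_const_mul fun _ _ => rfl]
  exacts [hxb, hyb, hbal]

lemma eq_zero_of_renewal_of_R0_le_one {Λ μS S r x0 y0 : ℝ} (hμS : 0 < μS) (hr : 0 < r)
    (hR : Λ * r / μS ≤ 1) (hx0 : 0 ≤ x0) (hy0 : 0 ≤ y0) (hxb : x0 = S * (x0 * r))
    (hbal : Λ = μS * S + x0 + y0) : x0 = 0 := by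
  by_contra hne
  have hSr : S * r = 1 := by
    refine mul_left_cancel₀ hne ?_
    linear_combination -hxb
  rw [div_le_one hμS] at hR
  have hx0pos : 0 < x0 := lt_of_le_of_ne hx0 (Ne.symm hne)
  -- multiplying the balance by `r` gives `Λ r = μS + (x0 + y0) r > μS`
  nlinarith

lemma renewal_balance_cases {Λ μS S r y0 : ℝ} (hμS : μS ≠ 0) (hyb : y0 = S * (y0 * r))
    (hbal : Λ = μS * S + y0) :
    (S = Λ / μS ∧ y0 = 0) ∨ (S = 1 / r ∧ y0 = μS * (Λ * r / μS - 1) / r) := by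
  by_cases hy0 : y0 = 0
  · left
    refine ⟨?_, hy0⟩
    rw [eq_div_iff hμS]
    linarith
  · right
    have hSr : S * r = 1 := by
      refine mul_left_cancel₀ hy0 ?_
      linear_combination -hyb
    have hr : r ≠ 0 := right_ne_zero_of_mul_eq_one hSr
    refine ⟨eq_one_div_of_mul_eq_one_left hSr, ?_⟩
    rw [mul_sub, mul_div_cancel₀ _ hμS, mul_one, sub_div, mul_div_cancel_right₀ _ hr,
      ← mul_one (μS / r), ← hSr]
    field_simp
    linear_combination -hbal

/-- **If `R₀ˣ ≤ 1 < R₀ʸ`, the set of equilibria of the two-strain SI system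
is exactly `{E₀, E₂}`.** -/
theorem equilibria_E0_E2 (Λ μS : ℝ) (μx μy βx βy : ℝ → ℝ)
    (hΛ : 0 < Λ) (hμS : 0 < μS)
    (hμxc : ContinuousOn μx (Ici 0)) (hμyc : ContinuousOn μy (Ici 0))
    (rx ry : ℝ)
    (hrx : rx = ∫ a in Ici (0:ℝ), βx a * survival μx a)
    (hry : ry = ∫ a in Ici (0:ℝ), βy a * survival μy a)
    (hrxpos : 0 < rx) (hrypos : 0 < ry)
    (R0x R0y : ℝ) (hR0x : R0x = Λ * rx / μS) (hR0y : R0y = Λ * ry / μS)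
    (R0x R0y : ℝ) (hR0x : R0x = Λ * rx / μS) (hR0y : R0y = Λ * ry / μS)
    (hRx : R0x ≤ 1) (hRy : 1 < R0y) :
    IsEquilibrium Λ μS μx μy βx βy (Λ / μS) (fun _ => 0) (fun _ => 0) ∧
    IsEquilibrium Λ μS μx μy βx βy (1 / ry)
      (fun _ => 0) (fun a => μS * (R0y - 1) / ry * survival μy a) ∧
    ∀ S x y, IsEquilibrium Λ μS μx μy βx βy S x y →
      (S = Λ / μS ∧ (∀ a, 0 ≤ a → x a = 0) ∧ (∀ a, 0 ≤ a → y a = 0)) ∨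
      (S = 1 / ry ∧ (∀ a, 0 ≤ a → x a = 0) ∧
        (∀ a, 0 ≤ a → y a = μS * (R0y - 1) / ry * survival μy a)) := by
  subst hrx hry hR0x hR0y
  refine ⟨?_, ?_, ?_⟩
  · simpa only [zero_mul] using isEquilibrium_mul_survival (Λ := Λ) (μS := μS) (βx := βx)
      (βy := βy) hμxc hμyc (div_pos hΛ hμS).le le_rfl le_rfl (by ring) (by ring)
      (by field_simp; ring)
  · simpa only [zero_mul] using isEquilibrium_mul_survival (Λ := Λ) (μS := μS) (βx := βx)
      hμxc hμyc (one_div_pos.2 hrypos).le le_rfl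
      (div_pos (mul_pos hμS (sub_pos.2 hRy)) hrypos).le (by ring) (by field_simp)
      (by field_simp; ring)
  · rintro S x y ⟨-, hx, hy, hxd, hyd, hxb, hyb, hbal⟩
    have hxπ a (ha : 0 ≤ a) := eq_mul_survival_of_hasDerivWithinAt hμxc hxd ha
    have hyπ a (ha : 0 ≤ a) := eq_mul_survival_of_hasDerivWithinAt hμyc hyd ha
    rw [setIntegral_Ici_mul_eq_of_eq_const_mul hxπ] at hxb
    rw [setIntegral_Ici_mul_eq_of_eq_const_mul hyπ] at hyb
    have hx0 :=
      eq_zero_of_renewal_of_R0_le_one hμS hrxpos hRx (hx 0 le_rfl) (hy 0 le_rfl) hxb hbal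
    have hx_zero a (ha : 0 ≤ a) : x a = 0 := by rw [hxπ a ha, hx0, zero_mul]
    rw [hx0, add_zero] at hbal
    rcases renewal_balance_cases hμS.ne' hyb hbal with ⟨hS, hy0⟩ | ⟨hS, hy0⟩
    · exact .inl ⟨hS, hx_zero, fun a ha => by rw [hyπ a ha, hy0, zero_mul]⟩
    · exact .inr ⟨hS, hx_zero, fun a ha => by rw [hyπ a ha, hy0]⟩
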